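/- arXiv:1506.07393 — 3 statements merged into one kernel-verified Lean document; each statement's English description precedes it below -/
import Mathlib

section
/- Let g : [0,∞) → ℝ be a positive, strictly increasing, differentiable function, let k > 0, let p be a positive integer, let q ∈ (0,1), and let λ > 0 and μ > 0 be real numbers. Then for all x, y with 0 < x < y, the following strict double inequality holds: g(0)^λ·k^{−(λ/k)(g(0)−g(x))}·e^{(λγ/k)(g(0)−g(x))}·Γ_k(g(0))^λ / (g(x)^λ·[p]_q^{−μ(g(0)−g(x))}·Γ_{(p,q)}(g(0))^μ) < Γ_k(g(x))^λ / Γ_{(p,q)}(g(x))^μ < g(y)^λ·k^{−(λ/k)(g(y)−g(x))}·e^{(λγ/k)(g(y)−g(x))}·Γ_k(g(y))^λ / (g(x)^λ·[p]_q^{−μ(g(y)−g(x))}·Γ_{(p,q)}(g(y))^μ). -/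
/-!
Since `Γ_k(s) = k^(s/k - 1) Γ(s/k)`, taking logarithms turns each outer member of the double
inequality, with endpoint `u` (`g 0` or `g y`) and `w = g x`, into
`exp (λ (log Γ(1 + u/k) + γ u/k) - μ ∑_{n=1}^p q^(nu)/(n(1-q^n)) - c(w))`; for `u = w` it is the
middle member. So everything reduces to monotonicity in `u`. The sum decreases, and
`t ↦ log Γ(1 + t) + γ t = log Γ(t + 2) - log (t + 1) + γ t` is strictly convex on `[0, ∞)`
(`log Γ` is convex by Bohr–Mollerup) with derivative `0` at `t = 0` because `Γ'(1) = -γ`, hence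
strictly increasing.
-/

open Real

/-- `[p]_q = (1 - q^p)/(1 - q)` -/
noncomputable def pnq (p : ℕ) (q : ℝ) : ℝ := (1 - q ^ p) / (1 - q)

/-- q-psi function via its series representation. -/
noncomputable def psiq (q s : ℝ) : ℝ :=
  -Real.log (1 - q) + Real.log q * ∑' n : ℕ, q ^ (((n : ℝ) + 1) * s) / (1 - q ^ (n + 1))

/-- (p,q)-psi function via its series representation. -/
noncomputable def psipq (p : ℕ) (q s : ℝ) : ℝ :=
  Real.log (pnq p q) +
    Real.log q * ∑ n ∈ Finset.range p, q ^ (((n : ℝ) + 1) * s) / (1 - q ^ (n + 1))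

/-- k-psi function via its series representation. -/
noncomputable def psik (k s : ℝ) : ℝ :=
  (Real.log k - Real.eulerMascheroniConstant) / k - 1 / s +
    ∑' n : ℕ, s / (((n : ℝ) + 1) * k * (((n : ℝ) + 1) * k + s))

/-- (q,k)-psi function via its series representation. -/
noncomputable def psiqk (q k s : ℝ) : ℝ :=
  -Real.log (1 - q) / k +
    Real.log q * ∑' n : ℕ, q ^ (((n : ℝ) + 1) * k * s) / (1 - q ^ (((n : ℝ) + 1) * k))

/-- Normalized q-Gamma function. -/
noncomputable def Gammaq (q s : ℝ) : ℝ :=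
  (1 - q) ^ (-s) *
    Real.exp (∑' n : ℕ, q ^ (((n : ℝ) + 1) * s) / (((n : ℝ) + 1) * (1 - q ^ (n + 1))))

/-- Normalized (p,q)-Gamma function. -/
noncomputable def Gammapq (p : ℕ) (q s : ℝ) : ℝ :=
  (pnq p q) ^ s *
    Real.exp (∑ n ∈ Finset.range p, q ^ (((n : ℝ) + 1) * s) / (((n : ℝ) + 1) * (1 - q ^ (n + 1))))

/-- Normalized (q,k)-Gamma function. -/
noncomputable def Gammaqk (q k s : ℝ) : ℝ :=
  (1 - q) ^ (-s / k) *
    Real.exp (∑' n : ℕ,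
      q ^ (((n : ℝ) + 1) * k * s) / (((n : ℝ) + 1) * k * (1 - q ^ (((n : ℝ) + 1) * k))))

/-- k-Gamma function. -/
noncomputable def Gammak (k s : ℝ) : ℝ :=
  ∫ x in Set.Ioi (0 : ℝ), Real.exp (-(x ^ k) / k) * x ^ (s - 1)

open Set

local notation "γ" => Real.eulerMascheroniConstant

theorem StrictConvexOn.strictMonoOn_of_hasDerivWithinAt_nonneg {f : ℝ → ℝ} {a f' : ℝ}
    (hf : StrictConvexOn ℝ (Ici a) f) (hf' : HasDerivWithinAt f f' (Ici a) a) (h0 : 0 ≤ f') :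
    StrictMonoOn f (Ici a) := by
  have hslope : ∀ y ∈ Ici a, a < y → 0 < (f y - f a) / (y - a) := fun y hy hay => by
    simpa only [slope_def_field] using
      h0.trans_lt (hf.lt_slope_of_hasDerivWithinAt self_mem_Ici hy hay hf')
  intro x hx y hy hxy
  rcases (mem_Ici.mp hx).eq_or_lt with rfl | hax
  · simpa [div_pos_iff, sub_pos, hxy] using hslope y hy hxy
  · have := (hslope x hx hax).trans (hf.slope_strict_mono_adjacent self_mem_Ici hy hax hxy)
    simpa [div_pos_iff, sub_pos, hxy] using this

theorem strictConvexOn_log_Gamma_add_one :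
    StrictConvexOn ℝ (Ici 0) (fun t => log (Gamma (t + 1))) := by
  have hconv : ConvexOn ℝ (Ici 0) (fun t => log (Gamma (t + 2))) :=
    (convexOn_log_Gamma.translate_left 2).subset (fun t (ht : 0 ≤ t) => by
      show 0 < 2 + t; linarith) (convex_Ici 0)
  have hlog : StrictConvexOn ℝ (Ici 0) (fun t => -log (t + 1)) :=
    ((strictConcaveOn_log_Ioi.translate_left 1).subset (fun t (ht : 0 ≤ t) => by
      show 0 < 1 + t; linarith) (convex_Ici 0)).neg
  refine (hconv.add_strictConvexOn hlog).congr fun t (ht : 0 ≤ t) => ?_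
  have h1 : 0 < t + 1 := by linarith
  show log (Gamma (t + 2)) + -log (t + 1) = log (Gamma (t + 1))
  rw [show t + 2 = (t + 1) + 1 by ring, Gamma_add_one h1.ne',
    log_mul h1.ne' (Gamma_pos_of_pos h1).ne']
  ring

theorem strictMonoOn_log_Gamma_add_one_add_mul :
    StrictMonoOn (fun t => log (Gamma (t + 1)) + γ * t) (Ici 0) := by
  have hγ : 0 ≤ γ := by linarith [one_half_lt_eulerMascheroniConstant]
  have hconv : StrictConvexOn ℝ (Ici 0) (fun t => log (Gamma (t + 1)) + γ * t) :=
    strictConvexOn_log_Gamma_add_one.add_convexOn ((convexOn_id (convex_Ici 0)).smul hγ)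
  have hG : HasDerivAt (fun t => Gamma (t + 1)) (-γ) 0 := by
    simpa using (zero_add (1 : ℝ)).symm ▸ hasDerivAt_Gamma_one |>.comp_add_const 0 1
  refine hconv.strictMonoOn_of_hasDerivWithinAt_nonneg ?_ le_rfl
  exact ((hG.log (by simp)).add ((hasDerivAt_id 0).const_mul γ)).hasDerivWithinAt.congr_deriv
    (by simp)

theorem Gammak_eq {k s : ℝ} (hk : 0 < k) (hs : 0 < s) :
    Gammak k s = k ^ (s / k - 1) * Gamma (s / k) := by
  have h := integral_rpow_mul_exp_neg_mul_rpow hk (by linarith : -1 < s - 1) (inv_pos.mpr hk)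
  rw [sub_add_cancel, inv_rpow hk.le, ← rpow_neg hk.le, neg_div, neg_neg] at h
  rw [rpow_sub hk, rpow_one, div_eq_mul_one_div, ← h, Gammak]
  refine MeasureTheory.setIntegral_congr_fun measurableSet_Ioi fun x _ => ?_
  rw [mul_comm, neg_div, neg_mul, div_eq_inv_mul]

theorem log_Gammak {k s : ℝ} (hk : 0 < k) (hs : 0 < s) :
    log (Gammak k s) = log (Gamma (s / k + 1)) + s / k * log k - log s := by
  have hsk : 0 < s / k := div_pos hs hk
  have hG := Gamma_pos_of_pos hsk
  rw [Gammak_eq hk hs, Gamma_add_one hsk.ne', log_mul (by positivity) hG.ne',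
    log_mul hsk.ne' hG.ne', log_rpow hk, log_div hs.ne' hk.ne']
  ring

theorem Gammak_pos {k s : ℝ} (hk : 0 < k) (hs : 0 < s) : 0 < Gammak k s := by
  rw [Gammak_eq hk hs]
  have := Gamma_pos_of_pos (div_pos hs hk)
  positivity

theorem pnq_pos {p : ℕ} (hp : 0 < p) {q : ℝ} (hq0 : 0 ≤ q) (hq1 : q < 1) : 0 < pnq p q :=
  div_pos (sub_pos.mpr (pow_lt_one₀ hq0 hq1 hp.ne')) (sub_pos.mpr hq1)

noncomputable def gammapqSum (p : ℕ) (q s : ℝ) : ℝ :=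
  ∑ n ∈ Finset.range p, q ^ (((n : ℝ) + 1) * s) / (((n : ℝ) + 1) * (1 - q ^ (n + 1)))

theorem log_Gammapq {p : ℕ} (hp : 0 < p) {q : ℝ} (hq0 : 0 ≤ q) (hq1 : q < 1) (s : ℝ) :
    log (Gammapq p q s) = s * log (pnq p q) + gammapqSum p q s := by
  rw [Gammapq, log_mul (rpow_pos_of_pos (pnq_pos hp hq0 hq1) s).ne' (exp_pos _).ne',
    log_rpow (pnq_pos hp hq0 hq1), log_exp, gammapqSum]

theorem Gammapq_pos {p : ℕ} (hp : 0 < p) {q : ℝ} (hq0 : 0 ≤ q) (hq1 : q < 1) (s : ℝ) :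
    0 < Gammapq p q s :=
  mul_pos (rpow_pos_of_pos (pnq_pos hp hq0 hq1) s) (exp_pos _)

theorem strictAnti_gammapqSum {p : ℕ} (hp : 0 < p) {q : ℝ} (hq0 : 0 < q) (hq1 : q < 1) :
    StrictAnti (gammapqSum p q) := by
  intro a b hab
  refine Finset.sum_lt_sum_of_nonempty (Finset.nonempty_range_iff.mpr hp.ne') fun n _ => ?_
  have hn : (0 : ℝ) < n + 1 := by positivity
  have hqn : 0 < 1 - q ^ (n + 1) := sub_pos.mpr (pow_lt_one₀ hq0.le hq1 n.succ_ne_zero)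
  gcongr
  exact rpow_lt_rpow_of_exponent_gt hq0 hq1 (by gcongr)

noncomputable def gammaRatioBound (k : ℝ) (p : ℕ) (q lam mu u w : ℝ) : ℝ :=
  u ^ lam * k ^ (-(lam / k * (u - w))) * exp (lam * γ / k * (u - w)) * Gammak k u ^ lam /
    (w ^ lam * pnq p q ^ (-(mu * (u - w))) * Gammapq p q u ^ mu)

theorem gammaRatioBound_self (k : ℝ) (p : ℕ) (q lam mu : ℝ) {w : ℝ} (hw : 0 < w) :
    gammaRatioBound k p q lam mu w w = Gammak k w ^ lam / Gammapq p q w ^ mu := by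
  simp only [gammaRatioBound, sub_self, mul_zero, neg_zero, rpow_zero, exp_zero, mul_one]
  exact mul_div_mul_left _ _ (rpow_pos_of_pos hw lam).ne'

theorem gammaRatioBound_eq_exp {k : ℝ} (hk : 0 < k) {p : ℕ} (hp : 0 < p) {q : ℝ} (hq0 : 0 ≤ q)
    (hq1 : q < 1) (lam mu : ℝ) {u w : ℝ} (hu : 0 < u) (hw : 0 < w) :
    gammaRatioBound k p q lam mu u w =
      exp (lam * (log (Gamma (u / k + 1)) + γ * (u / k)) - mu * gammapqSum p q u -
        (lam * (log w - w / k * log k + γ * (w / k)) + mu * (w * log (pnq p q)))) := by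
  have hpnq := pnq_pos hp hq0 hq1
  simp only [gammaRatioBound, rpow_def_of_pos hu, rpow_def_of_pos hw, rpow_def_of_pos hk,
    rpow_def_of_pos hpnq, rpow_def_of_pos (Gammak_pos hk hu),
    rpow_def_of_pos (Gammapq_pos hp hq0 hq1 u), ← exp_add, ← exp_sub,
    log_Gammak hk hu, log_Gammapq hp hq0 hq1]
  congr 1
  field_simp
  ring

theorem strictMonoOn_gammaRatioBound {k : ℝ} (hk : 0 < k) {p : ℕ} (hp : 0 < p) {q : ℝ}
    (hq0 : 0 < q) (hq1 : q < 1) {lam mu : ℝ} (hlam : 0 < lam) (hmu : 0 ≤ mu) {w : ℝ} (hw : 0 < w) :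
    StrictMonoOn (fun u => gammaRatioBound k p q lam mu u w) (Ioi 0) := by
  intro a (ha : 0 < a) b (hb : 0 < b) hab
  simp only [gammaRatioBound_eq_exp hk hp hq0.le hq1 lam mu ha hw,
    gammaRatioBound_eq_exp hk hp hq0.le hq1 lam mu hb hw, exp_lt_exp, sub_lt_sub_iff_right]
  have hG := strictMonoOn_log_Gamma_add_one_add_mul (mem_Ici.mpr (div_pos ha hk).le)
    (mem_Ici.mpr (div_pos hb hk).le) (div_lt_div_of_pos_right hab hk)
  have hS := strictAnti_gammapqSum hp hq0 hq1 hab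
  linarith [mul_lt_mul_of_pos_left hG hlam, mul_le_mul_of_nonneg_left hS.le hmu]

theorem stmt6_general (g : ℝ → ℝ) (hgpos : ∀ t ∈ Set.Ici (0 : ℝ), 0 < g t)
    (hgmono : StrictMonoOn g (Set.Ici (0 : ℝ)))
    (k : ℝ) (hk : 0 < k) (p : ℕ) (hp : 0 < p) (q : ℝ) (hq : q ∈ Set.Ioo (0 : ℝ) 1)
    (lam mu : ℝ) (hlam : 0 < lam) (hmu : 0 < mu)
    (x y : ℝ) (hx : 0 < x) (hxy : x < y) :
    (g 0) ^ lam * k ^ (-(lam / k * (g 0 - g x))) *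
        Real.exp (lam * Real.eulerMascheroniConstant / k * (g 0 - g x)) *
        (Gammak k (g 0)) ^ lam /
        ((g x) ^ lam * (pnq p q) ^ (-(mu * (g 0 - g x))) * (Gammapq p q (g 0)) ^ mu) <
      (Gammak k (g x)) ^ lam / (Gammapq p q (g x)) ^ mu ∧
    (Gammak k (g x)) ^ lam / (Gammapq p q (g x)) ^ mu <
      (g y) ^ lam * k ^ (-(lam / k * (g y - g x))) *
        Real.exp (lam * Real.eulerMascheroniConstant / k * (g y - g x)) *
        (Gammak k (g y)) ^ lam /
        ((g x) ^ lam * (pnq p q) ^ (-(mu * (g y - g x))) * (Gammapq p q (g y)) ^ mu) := by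
  have h0 : (0 : ℝ) ∈ Ici 0 := self_mem_Ici
  have hx' : x ∈ Ici 0 := hx.le
  have hy' : y ∈ Ici 0 := (hx.trans hxy).le
  have hmono := strictMonoOn_gammaRatioBound hk hp hq.1 hq.2 hlam hmu.le (hgpos x hx')
  rw [← gammaRatioBound_self k p q lam mu (hgpos x hx')]
  exact ⟨hmono (hgpos 0 h0) (hgpos x hx') (hgmono h0 hx' hx),
    hmono (hgpos x hx') (hgpos y hy') (hgmono hx' hy' hxy)⟩

theorem stmt6 (g : ℝ → ℝ) (hgpos : ∀ t ∈ Set.Ici (0 : ℝ), 0 < g t)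
    (hgmono : StrictMonoOn g (Set.Ici (0 : ℝ)))
    (hgdiff : DifferentiableOn ℝ g (Set.Ici (0 : ℝ)))
    (k : ℝ) (hk : 0 < k) (p : ℕ) (hp : 0 < p) (q : ℝ) (hq : q ∈ Set.Ioo (0 : ℝ) 1)
    (lam mu : ℝ) (hlam : 0 < lam) (hmu : 0 < mu)
    (x y : ℝ) (hx : 0 < x) (hxy : x < y) :
    (g 0) ^ lam * k ^ (-(lam / k * (g 0 - g x))) *
        Real.exp (lam * Real.eulerMascheroniConstant / k * (g 0 - g x)) *
        (Gammak k (g 0)) ^ lam /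
        ((g x) ^ lam * (pnq p q) ^ (-(mu * (g 0 - g x))) * (Gammapq p q (g 0)) ^ mu) <
      (Gammak k (g x)) ^ lam / (Gammapq p q (g x)) ^ mu ∧
    (Gammak k (g x)) ^ lam / (Gammapq p q (g x)) ^ mu <
      (g y) ^ lam * k ^ (-(lam / k * (g y - g x))) *
        Real.exp (lam * Real.eulerMascheroniConstant / k * (g y - g x)) *
        (Gammak k (g y)) ^ lam /
        ((g x) ^ lam * (pnq p q) ^ (-(mu * (g y - g x))) * (Gammapq p q (g y)) ^ mu) :=
  stmt6_general g hgpos hgmono k hk p hp q hq lam mu hlam hmu x y hx hxy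
end

section
/- Let g : [0,∞) → ℝ be a positive, increasing, differentiable function, let q ∈ (0,1), let k ≥ 1, and let λ ≥ μ > 0 be real numbers. Then the function H(t) = (1−q)^{λ g(t) − (μ/k) g(t)}·Γ_q(g(t))^λ / Γ_{(q,k)}(g(t))^μ is non-increasing on [0,∞); that is, for all 0 ≤ s ≤ t we have H(s) ≥ H(t). -/
open Real

/-! The logarithm of the ratio is `(λ - μ) A(x) + μ (A(x) - B(x))`, where `A` and `B` are the series in
the exponents of `Gammaq` and `Gammaqk`: the `(1 - q)`-powers cancel exactly. Both `A` and `A - B` are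
decreasing in `x`, termwise; for `A - B` the `n`-th term is, with `c = q^(n+1)`,
`(c^x / (1 - c) - c^(k x) / (k (1 - c^k))) / (n + 1)`, whose derivative
`log c · (c^x / (1 - c) - c^(k x) / (1 - c^k))` is nonpositive because `c^(k x) ≤ c^x` and
`1 - c ≤ 1 - c^k` when `k ≥ 1`. -/

open Set

noncomputable def qGammaTerm (q x : ℝ) (n : ℕ) : ℝ :=
  q ^ (((n : ℝ) + 1) * x) / (((n : ℝ) + 1) * (1 - q ^ (n + 1)))

noncomputable def qkGammaTerm (q k x : ℝ) (n : ℕ) : ℝ :=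
  q ^ (((n : ℝ) + 1) * k * x) / (((n : ℝ) + 1) * k * (1 - q ^ (((n : ℝ) + 1) * k)))

noncomputable def qGammaRatio (q k lam mu x : ℝ) : ℝ :=
  (1 - q) ^ (lam * x - mu / k * x) * Gammaq q x ^ lam / Gammaqk q k x ^ mu

lemma qGammaRatio_eq_exp {q : ℝ} (hq1 : q < 1) (k lam mu x : ℝ) :
    qGammaRatio q k lam mu x =
      exp (lam * ∑' n, qGammaTerm q x n - mu * ∑' n, qkGammaTerm q k x n) := by
  have h1q : 0 < 1 - q := by linarith
  simp only [qGammaRatio, Gammaq, Gammaqk, qGammaTerm, qkGammaTerm, rpow_def_of_pos h1q,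
    ← exp_add, ← exp_mul, ← exp_sub, exp_eq_exp]
  ring

lemma one_sub_le_mul_one_sub_rpow {q a : ℝ} (hq0 : 0 < q) (hq1 : q ≤ 1) (ha : 1 ≤ a) :
    1 - q ≤ a * (1 - q ^ a) := by
  have hqa : q ^ a ≤ q := by simpa using rpow_le_rpow_of_exponent_ge hq0 hq1 ha
  nlinarith

lemma antitoneOn_rpow_div_sub_rpow_mul_div {c k : ℝ} (hc0 : 0 < c) (hc1 : c < 1) (hk : 1 ≤ k) :
    AntitoneOn (fun x => c ^ x / (1 - c) - c ^ (k * x) / (k * (1 - c ^ k))) (Ici 0) := by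
  have hk0 : k ≠ 0 := by positivity
  have hck : c ^ k ≤ c := by simpa using rpow_le_rpow_of_exponent_ge hc0 hc1.le hk
  have hder : ∀ x, HasDerivAt (fun x => c ^ x / (1 - c) - c ^ (k * x) / (k * (1 - c ^ k)))
      (log c * (c ^ x / (1 - c) - c ^ (k * x) / (1 - c ^ k))) x := by
    intro x
    have h1 := (hasDerivAt_id x).const_rpow hc0
    have h2 := ((hasDerivAt_id x).const_mul k).const_rpow hc0
    refine ((h1.div_const (1 - c)).sub (h2.div_const (k * (1 - c ^ k)))).congr_deriv ?_
    simp only [id]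
    field_simp
  refine antitoneOn_of_deriv_nonpos (convex_Ici 0)
    (fun x _ => (hder x).continuousAt.continuousWithinAt)
    (fun x _ => (hder x).differentiableAt.differentiableWithinAt) (fun x hx => ?_)
  rw [interior_Ici] at hx
  rw [(hder x).deriv]
  refine mul_nonpos_of_nonpos_of_nonneg (log_neg hc0 hc1).le (sub_nonneg.2 ?_)
  exact div_le_div₀ (rpow_nonneg hc0.le _)
    (rpow_le_rpow_of_exponent_ge hc0 hc1.le (le_mul_of_one_le_left (le_of_lt hx) hk))
    (by linarith) (by linarith)

section Terms

variable {q : ℝ} (hq0 : 0 < q) (hq1 : q < 1)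
include hq0 hq1

lemma one_sub_le_qGammaTerm_denom (n : ℕ) : 1 - q ≤ ((n : ℝ) + 1) * (1 - q ^ (n + 1)) := by
  exact_mod_cast one_sub_le_mul_one_sub_rpow hq0 hq1.le (le_add_of_nonneg_left n.cast_nonneg)

lemma one_sub_le_qkGammaTerm_denom {k : ℝ} (hk : 1 ≤ k) (n : ℕ) :
    1 - q ≤ ((n : ℝ) + 1) * k * (1 - q ^ (((n : ℝ) + 1) * k)) :=
  one_sub_le_mul_one_sub_rpow hq0 hq1.le
    (one_le_mul_of_one_le_of_one_le (le_add_of_nonneg_left n.cast_nonneg) hk)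

lemma summable_rpow_succ_mul_div {x : ℝ} (hx : 0 < x) {d : ℕ → ℝ} (hd : ∀ n, 1 - q ≤ d n) :
    Summable fun n : ℕ => q ^ (((n : ℝ) + 1) * x) / d n := by
  have h1q : 0 < 1 - q := by linarith
  have hpow : ∀ n : ℕ, q ^ (((n : ℝ) + 1) * x) = (q ^ x) ^ (n + 1) := fun n => by
    rw [mul_comm, rpow_mul hq0.le, ← rpow_natCast]
    push_cast
    rfl
  have hgeom : Summable fun n : ℕ => (q ^ x) ^ (n + 1) / (1 - q) :=
    ((summable_nat_add_iff 1).2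
      (summable_geometric_of_lt_one (rpow_nonneg hq0.le x) (rpow_lt_one hq0.le hq1 hx))).div_const _
  refine hgeom.of_nonneg_of_le (fun n => ?_) (fun n => ?_)
  · exact div_nonneg (rpow_nonneg hq0.le _) (h1q.le.trans (hd n))
  · rw [hpow]
    exact div_le_div_of_nonneg_left (pow_nonneg (rpow_nonneg hq0.le x) _) h1q (hd n)

lemma summable_qGammaTerm {x : ℝ} (hx : 0 < x) : Summable (qGammaTerm q x) :=
  summable_rpow_succ_mul_div hq0 hq1 hx (one_sub_le_qGammaTerm_denom hq0 hq1)

lemma summable_qkGammaTerm {k x : ℝ} (hk : 1 ≤ k) (hx : 0 < x) : Summable (qkGammaTerm q k x) := by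
  have := summable_rpow_succ_mul_div hq0 hq1 (mul_pos (by linarith : (0 : ℝ) < k) hx)
    (one_sub_le_qkGammaTerm_denom hq0 hq1 hk)
  simp only [← mul_assoc] at this
  exact this

lemma antitone_qGammaTerm (n : ℕ) : Antitone fun x => qGammaTerm q x n := by
  intro a b hab
  have hd : 0 < ((n : ℝ) + 1) * (1 - q ^ (n + 1)) :=
    (sub_pos.2 hq1).trans_le (one_sub_le_qGammaTerm_denom hq0 hq1 n)
  exact div_le_div_of_nonneg_right (rpow_le_rpow_of_exponent_ge hq0 hq1.le
    (mul_le_mul_of_nonneg_left hab (by positivity))) hd.le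

lemma antitoneOn_qGammaTerm_sub_qkGammaTerm {k : ℝ} (hk : 1 ≤ k) (n : ℕ) :
    AntitoneOn (fun x => qGammaTerm q x n - qkGammaTerm q k x n) (Ici 0) := by
  have hm : (0 : ℝ) < n + 1 := by positivity
  have hc : q ^ (n + 1) = q ^ ((n : ℝ) + 1) := by rw [← rpow_natCast]; push_cast; rfl
  have hterm : ∀ x, qGammaTerm q x n - qkGammaTerm q k x n =
      ((q ^ ((n : ℝ) + 1)) ^ x / (1 - q ^ ((n : ℝ) + 1)) -
        (q ^ ((n : ℝ) + 1)) ^ (k * x) / (k * (1 - (q ^ ((n : ℝ) + 1)) ^ k))) / ((n : ℝ) + 1) :=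
    fun x => by
      rw [qGammaTerm, qkGammaTerm, hc, mul_assoc, rpow_mul hq0.le, rpow_mul hq0.le,
        rpow_mul hq0.le]
      field_simp
  have hanti := antitoneOn_rpow_div_sub_rpow_mul_div (rpow_pos_of_pos hq0 ((n : ℝ) + 1))
    (rpow_lt_one hq0.le hq1 hm) hk
  intro a ha b hb hab
  simp only [hterm]
  exact div_le_div_of_nonneg_right (hanti ha hb hab) hm.le

theorem antitoneOn_qGammaRatio {k lam mu : ℝ} (hk : 1 ≤ k) (hmu : 0 ≤ mu) (hlm : mu ≤ lam) : AntitoneOn (qGammaRatio q k lam mu) (Ioi 0) := by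
  intro a ha b hb hab
  have hA := Summable.tsum_le_tsum (fun n => antitone_qGammaTerm hq0 hq1 n hab)
    (summable_qGammaTerm hq0 hq1 hb) (summable_qGammaTerm hq0 hq1 ha)
  have hAB : ∑' n, qGammaTerm q b n - ∑' n, qkGammaTerm q k b n ≤
      ∑' n, qGammaTerm q a n - ∑' n, qkGammaTerm q k a n := by
    rw [← (summable_qGammaTerm hq0 hq1 ha).tsum_sub (summable_qkGammaTerm hq0 hq1 hk ha),
      ← (summable_qGammaTerm hq0 hq1 hb).tsum_sub (summable_qkGammaTerm hq0 hq1 hk hb)]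
    exact Summable.tsum_le_tsum
      (fun n => antitoneOn_qGammaTerm_sub_qkGammaTerm hq0 hq1 hk n (Ioi_subset_Ici_self ha)
        (Ioi_subset_Ici_self hb) hab)
      ((summable_qGammaTerm hq0 hq1 hb).sub (summable_qkGammaTerm hq0 hq1 hk hb))
      ((summable_qGammaTerm hq0 hq1 ha).sub (summable_qkGammaTerm hq0 hq1 hk ha))
  rw [qGammaRatio_eq_exp hq1, qGammaRatio_eq_exp hq1, exp_le_exp]
  linarith [mul_le_mul_of_nonneg_left hA (sub_nonneg.2 hlm), mul_le_mul_of_nonneg_left hAB hmu]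

end Terms

theorem stmt9_general (g : ℝ → ℝ) (hgpos : ∀ t ∈ Set.Ici (0 : ℝ), 0 < g t)
    (hgmono : MonotoneOn g (Set.Ici (0 : ℝ)))
    (q : ℝ) (hq : q ∈ Set.Ioo (0 : ℝ) 1) (k : ℝ) (hk : 1 ≤ k)
    (lam mu : ℝ) (hmu : 0 < mu) (hlm : mu ≤ lam) :
    ∀ s t : ℝ, 0 ≤ s → s ≤ t →
      (1 - q) ^ (lam * g t - mu / k * g t) * (Gammaq q (g t)) ^ lam /
          (Gammaqk q k (g t)) ^ mu ≤
        (1 - q) ^ (lam * g s - mu / k * g s) * (Gammaq q (g s)) ^ lam /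
          (Gammaqk q k (g s)) ^ mu := by
  intro s t hs hst
  have ht : 0 ≤ t := hs.trans hst
  exact antitoneOn_qGammaRatio hq.1 hq.2 hk hmu.le hlm (hgpos s hs) (hgpos t ht)
    (hgmono hs ht hst)

theorem stmt9 (g : ℝ → ℝ) (hgpos : ∀ t ∈ Set.Ici (0 : ℝ), 0 < g t)
    (hgmono : MonotoneOn g (Set.Ici (0 : ℝ)))
    (hgdiff : DifferentiableOn ℝ g (Set.Ici (0 : ℝ)))
    (q : ℝ) (hq : q ∈ Set.Ioo (0 : ℝ) 1) (k : ℝ) (hk : 1 ≤ k)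
    (lam mu : ℝ) (hmu : 0 < mu) (hlm : mu ≤ lam) :
    ∀ s t : ℝ, 0 ≤ s → s ≤ t →
      (1 - q) ^ (lam * g t - mu / k * g t) * (Gammaq q (g t)) ^ lam /
          (Gammaqk q k (g t)) ^ mu ≤
        (1 - q) ^ (lam * g s - mu / k * g s) * (Gammaq q (g s)) ^ lam /
          (Gammaqk q k (g s)) ^ mu :=
  stmt9_general g hgpos hgmono q hq k hk lam mu hmu hlm
end

section
/- Let g : [0,∞) → ℝ be a positive, strictly increasing, differentiable function, let k > 0, let q ∈ (0,1), and let λ > 0 and μ > 0 be real numbers. Then the function T(t) = g(t)^λ·e^{λ γ g(t)/k}·Γ_k(g(t))^λ / (k^{λ g(t)/k}·(1−q)^{μ g(t)/k}·Γ_{(q,k)}(g(t))^μ) is strictly increasing on [0,∞); that is, for all 0 ≤ s < t we have T(s) < T(t). -/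
/-!
With `y = x / k`, the identities `Γ_k(x) = k^(x/k - 1) Γ(x/k)` and `x Γ(x/k) = k Γ(x/k + 1)`
turn the ratio into `exp (λ (γ y + log Γ(y + 1)) - μ S(x))`, where `S` is the series in the
exponent of `Γ_{(q,k)}`; all powers of `k` and of `1 - q` cancel. `S` is strictly decreasing
termwise. The function `γ y + log Γ(y)` is strictly convex on `(0, ∞)`, being `-log y` plus
the convex `γ y + log Γ(y + 1)`, and its derivative at `1` is `γ + Γ'(1) = 0`, so it is
strictly increasing on `[1, ∞)`. As `g` is positive and increasing, both effects push the
ratio up.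
-/

open Real

open Set

theorem StrictConvexOn.strictMonoOn_of_hasDerivAt_eq_zero {S : Set ℝ} {f : ℝ → ℝ} {a : ℝ}
    (hf : StrictConvexOn ℝ S f) (ha : a ∈ S) (hfa : HasDerivAt f 0 a) :
    StrictMonoOn f (S ∩ Ici a) := by
  have base : ∀ y ∈ S, a < y → f a < f y := fun y hy hay => by
    have := hf.lt_slope_of_hasDerivAt ha hy hay hfa
    rw [slope_def_field, lt_div_iff₀ (sub_pos.2 hay)] at this
    linarith
  rintro u ⟨huS, hau : a ≤ u⟩ v ⟨hvS, -⟩ huv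
  rcases hau.eq_or_lt with rfl | hau
  · exact base v hvS huv
  · exact hf.convexOn.strictMonoOn ha hau (base u huS hau) ⟨huS, mem_Ici.2 le_rfl⟩
      ⟨hvS, mem_Ici.2 huv.le⟩ huv

theorem convexOn_log_Gamma_add_one :
    ConvexOn ℝ (Ioi (-1)) fun y : ℝ => log (Gamma (y + 1)) := by
  have hpre : (fun z : ℝ => 1 + z) ⁻¹' Ioi 0 = Ioi (-1) := by
    ext y
    simp only [mem_preimage, mem_Ioi]
    constructor <;> intro h <;> linarith
  refine (hpre ▸ convexOn_log_Gamma.translate_right 1).congr fun y _ => ?_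
  simp [add_comm]

theorem strictConvexOn_eulerMascheroniConstant_mul_add_log_Gamma :
    StrictConvexOn ℝ (Ioi 0) fun y => eulerMascheroniConstant * y + log (Gamma y) := by
  have hlin : ConvexOn ℝ (Ioi 0) fun y : ℝ => eulerMascheroniConstant * y :=
    (LinearMap.mulLeft ℝ eulerMascheroniConstant).convexOn (convex_Ioi 0)
  have hshift : ConvexOn ℝ (Ioi 0) fun y : ℝ => log (Gamma (y + 1)) :=
    convexOn_log_Gamma_add_one.subset (Ioi_subset_Ioi (by norm_num)) (convex_Ioi 0)
  refine ((strictConcaveOn_log_Ioi.neg.add_convexOn hshift).add_convexOn hlin).congr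
    fun y (hy : 0 < y) => ?_
  simp only [Pi.add_apply, Pi.neg_apply, Gamma_add_one hy.ne',
    log_mul hy.ne' (Gamma_pos_of_pos hy).ne']
  ring

theorem hasDerivAt_eulerMascheroniConstant_mul_add_log_Gamma_one :
    HasDerivAt (fun y => eulerMascheroniConstant * y + log (Gamma y)) 0 1 := by
  have hlog : HasDerivAt (fun y => log (Gamma y)) (-eulerMascheroniConstant) 1 := by
    simpa using hasDerivAt_Gamma_one.log (by simp)
  have h := ((hasDerivAt_id' 1).const_mul eulerMascheroniConstant).add hlog
  rwa [mul_one, add_neg_cancel] at h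

theorem strictMonoOn_eulerMascheroniConstant_mul_add_log_Gamma_add_one :
    StrictMonoOn (fun y => eulerMascheroniConstant * y + log (Gamma (y + 1))) (Ici 0) := by
  intro u (hu : 0 ≤ u) v (hv : 0 ≤ v) huv
  have hmono :=
    strictConvexOn_eulerMascheroniConstant_mul_add_log_Gamma.strictMonoOn_of_hasDerivAt_eq_zero
      (mem_Ioi.2 one_pos) hasDerivAt_eulerMascheroniConstant_mul_add_log_Gamma_one
  have key := hmono (a := u + 1) ⟨mem_Ioi.2 (by linarith), mem_Ici.2 (by linarith)⟩
    (b := v + 1) ⟨mem_Ioi.2 (by linarith), mem_Ici.2 (by linarith)⟩ (by linarith)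
  simp only at key ⊢
  linarith

theorem Gammak_eq_rpow_mul_Gamma {k x : ℝ} (hk : 0 < k) (hx : 0 < x) :
    Gammak k x = k ^ (x / k - 1) * Gamma (x / k) := by
  have h := integral_rpow_mul_exp_neg_mul_rpow hk (by linarith : -1 < x - 1) (one_div_pos.2 hk)
  rw [sub_add_cancel, one_div, inv_rpow hk.le, ← rpow_neg hk.le, neg_div, neg_neg] at h
  rw [rpow_sub_one hk.ne', div_eq_mul_inv, Gammak, ← h]
  refine MeasureTheory.setIntegral_congr_fun measurableSet_Ioi fun t _ => ?_
  rw [mul_comm, neg_mul, inv_mul_eq_div, neg_div]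

noncomputable def qkSeries (q k x : ℝ) : ℝ :=
  ∑' n : ℕ,
    q ^ (((n : ℝ) + 1) * k * x) / (((n : ℝ) + 1) * k * (1 - q ^ (((n : ℝ) + 1) * k)))

theorem Gammaqk_eq_rpow_mul_exp_qkSeries (q k x : ℝ) :
    Gammaqk q k x = (1 - q) ^ (-x / k) * exp (qkSeries q k x) :=
  rfl

section qkSeries

variable {q k : ℝ}

theorem qkSeries_denom_pos (hq0 : 0 < q) (hq1 : q < 1) (hk : 0 < k) (n : ℕ) :
    0 < ((n : ℝ) + 1) * k * (1 - q ^ (((n : ℝ) + 1) * k)) := by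
  have hnk : 0 < ((n : ℝ) + 1) * k := by positivity
  exact mul_pos hnk (sub_pos.2 (rpow_lt_one hq0.le hq1 hnk))

theorem summable_qkSeries (hq0 : 0 < q) (hq1 : q < 1) (hk : 0 < k) {x : ℝ} (hx : 0 < x) :
    Summable fun n : ℕ =>
      q ^ (((n : ℝ) + 1) * k * x) / (((n : ℝ) + 1) * k * (1 - q ^ (((n : ℝ) + 1) * k))) := by
  set r := q ^ (k * x)
  have hqk : q ^ k < 1 := rpow_lt_one hq0.le hq1 hk
  -- the denominators increase from `k (1 - q ^ k)`, the numerators are `r ^ (n + 1)`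
  refine Summable.of_nonneg_of_le (fun n => div_nonneg (rpow_nonneg hq0.le _)
    (qkSeries_denom_pos hq0 hq1 hk n).le) (fun n => ?_)
    ((summable_geometric_of_lt_one (rpow_nonneg hq0.le _)
      (rpow_lt_one hq0.le hq1 (by positivity) : r < 1)).mul_left r |>.div_const (k * (1 - q ^ k)))
  have hnum : q ^ (((n : ℝ) + 1) * k * x) = r * r ^ n := by
    rw [← pow_succ', ← rpow_natCast, ← rpow_mul hq0.le]
    push_cast
    ring_nf
  have hn : (1 : ℝ) ≤ (n : ℝ) + 1 := by simp
  have hden : k * (1 - q ^ k) ≤ ((n : ℝ) + 1) * k * (1 - q ^ (((n : ℝ) + 1) * k)) := by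
    refine mul_le_mul (le_mul_of_one_le_left hk.le hn) (sub_le_sub_left ?_ 1) (by linarith)
      (by positivity)
    exact rpow_le_rpow_of_exponent_ge hq0 hq1.le (le_mul_of_one_le_left hk.le hn)
  rw [hnum]
  exact div_le_div_of_nonneg_left (by positivity) (mul_pos hk (by linarith)) hden

theorem qkSeries_strictAntiOn (hq0 : 0 < q) (hq1 : q < 1) (hk : 0 < k) :
    StrictAntiOn (qkSeries q k) (Ioi 0) := by
  intro a (ha : 0 < a) b (hb : 0 < b) hab
  have hexp : ∀ n : ℕ, ((n : ℝ) + 1) * k * a < ((n : ℝ) + 1) * k * b := fun n =>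
    mul_lt_mul_of_pos_left hab (by positivity)
  refine Summable.tsum_lt_tsum_of_nonneg (i := 0)
    (fun n => div_nonneg (rpow_nonneg hq0.le _) (qkSeries_denom_pos hq0 hq1 hk n).le)
    (fun n => ?_) ?_ (summable_qkSeries hq0 hq1 hk ha)
  · exact div_le_div_of_nonneg_right
      (rpow_le_rpow_of_exponent_ge hq0 hq1.le (hexp n).le) (qkSeries_denom_pos hq0 hq1 hk n).le
  · exact div_lt_div_of_pos_right
      (rpow_lt_rpow_of_exponent_gt hq0 hq1 (hexp 0)) (qkSeries_denom_pos hq0 hq1 hk 0)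

end qkSeries

theorem kGamma_div_qkGamma_eq_exp {q k lam mu x : ℝ} (hq1 : q < 1) (hk : 0 < k) (hx : 0 < x) :
    x ^ lam * exp (lam * eulerMascheroniConstant * x / k) * Gammak k x ^ lam /
        (k ^ (lam * x / k) * (1 - q) ^ (mu * x / k) * Gammaqk q k x ^ mu) =
      exp (lam * (eulerMascheroniConstant * (x / k) + log (Gamma (x / k + 1)))
        - mu * qkSeries q k x) := by
  have hy : 0 < x / k := div_pos hx hk
  have hΓ : 0 < Gamma (x / k) := Gamma_pos_of_pos hy
  have hq : 0 < 1 - q := sub_pos.2 hq1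
  have hGk : 0 < Gammak k x := by
    rw [Gammak_eq_rpow_mul_Gamma hk hx]
    positivity
  have hGqk : 0 < Gammaqk q k x := by
    rw [Gammaqk_eq_rpow_mul_exp_qkSeries]
    positivity
  rw [← exp_log (by positivity : 0 < x ^ lam * exp (lam * eulerMascheroniConstant * x / k) *
    Gammak k x ^ lam / (k ^ (lam * x / k) * (1 - q) ^ (mu * x / k) * Gammaqk q k x ^ mu))]
  congr 1
  simp (disch := positivity) only [log_div, log_mul, log_rpow, log_exp]
  rw [Gammak_eq_rpow_mul_Gamma hk hx, Gammaqk_eq_rpow_mul_exp_qkSeries, Gamma_add_one hy.ne']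
  simp (disch := positivity) only [log_div, log_mul, log_rpow, log_exp]
  field_simp
  ring

theorem stmt11_general (g : ℝ → ℝ) (hgpos : ∀ t ∈ Set.Ici (0 : ℝ), 0 < g t)
    (hgmono : StrictMonoOn g (Set.Ici (0 : ℝ)))
    (k : ℝ) (hk : 0 < k) (q : ℝ) (hq : q ∈ Set.Ioo (0 : ℝ) 1)
    (lam mu : ℝ) (hlam : 0 < lam) (hmu : 0 < mu) :
    ∀ s t : ℝ, 0 ≤ s → s < t →
      (g s) ^ lam * Real.exp (lam * Real.eulerMascheroniConstant * g s / k) *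
          (Gammak k (g s)) ^ lam /
          (k ^ (lam * g s / k) * (1 - q) ^ (mu * g s / k) * (Gammaqk q k (g s)) ^ mu) <
        (g t) ^ lam * Real.exp (lam * Real.eulerMascheroniConstant * g t / k) *
          (Gammak k (g t)) ^ lam /
          (k ^ (lam * g t / k) * (1 - q) ^ (mu * g t / k) * (Gammaqk q k (g t)) ^ mu) := by
  intro s t hs hst
  have ht : 0 ≤ t := hs.trans hst.le
  have hgs : 0 < g s := hgpos s hs
  have hgst : g s < g t := hgmono hs ht hst
  have hgt : 0 < g t := hgs.trans hgst
  rw [kGamma_div_qkGamma_eq_exp hq.2 hk hgs, kGamma_div_qkGamma_eq_exp hq.2 hk hgt, exp_lt_exp]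
  have hGamma := strictMonoOn_eulerMascheroniConstant_mul_add_log_Gamma_add_one
    (div_pos hgs hk).le (div_pos hgt hk).le (div_lt_div_of_pos_right hgst hk)
  have hseries := qkSeries_strictAntiOn hq.1 hq.2 hk hgs hgt hgst
  simp only at hGamma
  linarith [mul_lt_mul_of_pos_left hGamma hlam, mul_lt_mul_of_pos_left hseries hmu]

theorem stmt11 (g : ℝ → ℝ) (hgpos : ∀ t ∈ Set.Ici (0 : ℝ), 0 < g t)
    (hgmono : StrictMonoOn g (Set.Ici (0 : ℝ)))
    (hgdiff : DifferentiableOn ℝ g (Set.Ici (0 : ℝ)))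
    (k : ℝ) (hk : 0 < k) (q : ℝ) (hq : q ∈ Set.Ioo (0 : ℝ) 1)
    (lam mu : ℝ) (hlam : 0 < lam) (hmu : 0 < mu) :
    ∀ s t : ℝ, 0 ≤ s → s < t →
      (g s) ^ lam * Real.exp (lam * Real.eulerMascheroniConstant * g s / k) *
          (Gammak k (g s)) ^ lam /
          (k ^ (lam * g s / k) * (1 - q) ^ (mu * g s / k) * (Gammaqk q k (g s)) ^ mu) <
        (g t) ^ lam * Real.exp (lam * Real.eulerMascheroniConstant * g t / k) *
          (Gammak k (g t)) ^ lam /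
          (k ^ (lam * g t / k) * (1 - q) ^ (mu * g t / k) * (Gammaqk q k (g t)) ^ mu) :=
  stmt11_general g hgpos hgmono k hk q hq lam mu hlam hmu
end
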